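/- Let X be any subshift over a finite alphabet and ψ : ℕ → (0,∞) any positive function. Then the Hausdorff dimension of R(ψ) is at most h/(1+b), where h = h_top(X) and b = liminf_{n→∞} (−log ψ(n))/n ∈ [0,∞] (with the convention h/(1+b) = 0 when b = ∞). No specification or edit-approachability hypothesis is needed for this upper bound. -/

import Mathlib

open Filter MeasureTheory Set
open scoped ENNReal NNReal

noncomputable section

def SeqSpace (A : Type*) : Type _ := ℕ → A

namespace SeqSpace

variable {A : Type*}

/-- `|u ∧ v|`: the length of the longest common prefix of `u` and `v`. -/
def lcp (u v : SeqSpace A) : ℕ := sInf {n | u n ≠ v n}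

theorem lcp_mem {u v : SeqSpace A} (h : u ≠ v) : u (lcp u v) ≠ v (lcp u v) := by
  have hne : {n | u n ≠ v n}.Nonempty := by
    rcases Function.ne_iff.mp h with ⟨n, hn⟩
    exact ⟨n, hn⟩
  exact Nat.sInf_mem hne

theorem min_lcp_le (u v w : SeqSpace A) (huw : u ≠ w) :
    min (lcp u v) (lcp v w) ≤ lcp u w := by
  by_cases h : u (lcp u w) = v (lcp u w)
  · have hvw : v (lcp u w) ≠ w (lcp u w) := h ▸ lcp_mem huw
    exact le_trans (min_le_right _ _) (Nat.sInf_le hvw)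
  · exact le_trans (min_le_left _ _) (Nat.sInf_le h)

open scoped Classical in
/-- The metric `d(u,v) = e^{-|u ∧ v|}`. -/
def sdist (u v : SeqSpace A) : ℝ :=
  if u = v then 0 else Real.exp (-(lcp u v : ℝ))

theorem sdist_nonneg' (u v : SeqSpace A) : 0 ≤ sdist u v := by
  unfold sdist
  split
  · exact le_refl 0
  · exact (Real.exp_pos _).le

theorem lcp_comm (u v : SeqSpace A) : lcp u v = lcp v u := by
  unfold lcp
  congr 1
  ext n
  exact ne_comm

theorem sdist_self' (u : SeqSpace A) : sdist u u = 0 := by simp [sdist]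

theorem sdist_comm' (u v : SeqSpace A) : sdist u v = sdist v u := by
  unfold sdist
  by_cases h : u = v
  · simp [h]
  · rw [if_neg h, if_neg (Ne.symm h), lcp_comm]

theorem sdist_triangle' (u v w : SeqSpace A) : sdist u w ≤ sdist u v + sdist v w := by
  by_cases huw : u = w
  · rw [show sdist u w = 0 by rw [huw]; exact sdist_self' w]
    exact add_nonneg (sdist_nonneg' _ _) (sdist_nonneg' _ _)
  by_cases huv : u = v
  · subst huv
    rw [sdist_self', zero_add]
  by_cases hvw : v = w
  · subst hvw
    rw [sdist_self', add_zero]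
  simp only [sdist, if_neg huw, if_neg huv, if_neg hvw]
  have h1 : min (lcp u v) (lcp v w) ≤ lcp u w := min_lcp_le u v w huw
  rcases le_total (lcp u v) (lcp v w) with hle | hle
  · have h2 : lcp u v ≤ lcp u w := by rw [min_eq_left hle] at h1; exact h1
    have h3 : Real.exp (-(lcp u w : ℝ)) ≤ Real.exp (-(lcp u v : ℝ)) :=
      Real.exp_le_exp.mpr (by exact_mod_cast neg_le_neg (Nat.cast_le.mpr h2))
    linarith [Real.exp_pos (-(lcp v w : ℝ))]
  · have h2 : lcp v w ≤ lcp u w := by rw [min_eq_right hle] at h1; exact h1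
    have h3 : Real.exp (-(lcp u w : ℝ)) ≤ Real.exp (-(lcp v w : ℝ)) :=
      Real.exp_le_exp.mpr (by exact_mod_cast neg_le_neg (Nat.cast_le.mpr h2))
    linarith [Real.exp_pos (-(lcp u v : ℝ))]

theorem sdist_eq_zero' {u v : SeqSpace A} (h : sdist u v = 0) : u = v := by
  by_contra hne
  rw [sdist, if_neg hne] at h
  exact (Real.exp_pos _).ne' h

instance : MetricSpace (SeqSpace A) where
  dist := sdist
  dist_self := sdist_self'
  dist_comm := sdist_comm'
  dist_triangle := sdist_triangle'
  eq_of_dist_eq_zero := sdist_eq_zero'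

end SeqSpace

namespace SeqSpace

variable {A : Type*}

/-- The left shift map `σ`. -/
def shift (x : SeqSpace A) : SeqSpace A := fun n => x (n + 1)

/-- The word `w` occurs in `x` starting at position `k`. -/
def OccursAt (w : List A) (x : SeqSpace A) (k : ℕ) : Prop :=
  ∀ i, (h : i < w.length) → x (k + i) = w[i]'h

/-- The language of `X`: all finite words appearing in some point of `X`. -/
def language (X : Set (SeqSpace A)) : Set (List A) :=
  {w | ∃ x ∈ X, ∃ k, OccursAt w x k}

/-- The cylinder `[w]` of a finite word `w`. -/
def cyl (w : List A) : Set (SeqSpace A) := {x | OccursAt w x 0}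

/-- Birkhoff sum `S_n φ = ∑_{k=0}^{n-1} φ ∘ σ^k`. -/
def birkhoff (φ : SeqSpace A → ℝ) (n : ℕ) (x : SeqSpace A) : ℝ :=
  ∑ k ∈ Finset.range n, φ (shift^[k] x)

/-- The words of length `n` in a collection `D` of words. -/
def wordsOfLen (D : Set (List A)) (n : ℕ) : Set (List A) := {w ∈ D | w.length = n}

/-- Topological pressure `P(D,φ)` of a potential `φ` computed over the words of `D`
(the points of the subshift `X` are used to evaluate the Birkhoff sups over cylinders). -/
def pressure (X : Set (SeqSpace A)) (D : Set (List A)) (φ : SeqSpace A → ℝ) : ℝ :=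
  atTop.limsup fun n =>
    Real.log (∑ᶠ w ∈ wordsOfLen D n, Real.exp (sSup (birkhoff φ n '' (X ∩ cyl w)))) / n

/-- The recurrence set `R(ψ)` of points of `X` with `d(σ^n x, x) < ψ(n)` infinitely often. -/
def recSet (X : Set (SeqSpace A)) (ψ : ℕ → ℝ) : Set (SeqSpace A) :=
  {x ∈ X | ∃ᶠ n in atTop, dist (shift^[n] x) x < ψ n}

/-- The recurrence set `R(f)` of points of `X` with `d(σ^n x, x) ≤ e^{-S_n f(x)}`
infinitely often. -/
def recSetF (X : Set (SeqSpace A)) (f : SeqSpace A → ℝ) : Set (SeqSpace A) :=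
  {x ∈ X | ∃ᶠ n in atTop, dist (shift^[n] x) x ≤ Real.exp (-(birkhoff f n x))}

/-- A single edit of a word: substitution, insertion or deletion of one symbol. -/
def EditStep (w w' : List A) : Prop :=
  (∃ (u₁ u₂ : List A) (a a' : A), w = u₁ ++ a :: u₂ ∧ w' = u₁ ++ a' :: u₂) ∨
  (∃ (u₁ u₂ : List A) (a' : A), w = u₁ ++ u₂ ∧ w' = u₁ ++ a' :: u₂) ∨
  (∃ (u₁ u₂ : List A) (a : A), w = u₁ ++ a :: u₂ ∧ w' = u₁ ++ u₂)

/-- `EditChain n v w` : `v` can be transformed into `w` by `n` edits. -/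
def EditChain : ℕ → List A → List A → Prop
  | 0, v, w => v = w
  | n + 1, v, w => ∃ u, EditStep v u ∧ EditChain n u w

/-- The edit distance `d̂(v,w)`: the minimal number of edits transforming `v` into `w`. -/
def editDist (v w : List A) : ℕ := sInf {n | EditChain n v w}

/-- A mistake function: a nondecreasing `g : ℕ → ℕ` with `g n / n → 0`. -/
def MistakeFunction (g : ℕ → ℕ) : Prop :=
  Monotone g ∧ Tendsto (fun n => (g n : ℝ) / n) atTop (nhds 0)

/-- `L` is edit approachable by `G`. -/
def EditApproachable (L G : Set (List A)) : Prop :=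
  ∃ g : ℕ → ℕ, MistakeFunction g ∧ ∀ w ∈ L, ∃ v ∈ G, editDist v w ≤ g w.length

/-- `G ⊆ L` has (W)-specification with gap length `τ`. -/
def HasSpecW (L G : Set (List A)) (τ : ℕ) : Prop :=
  ∀ v ∈ G, ∀ w ∈ G, ∃ u ∈ L, u.length ≤ τ ∧ v ++ u ++ w ∈ G

/-- The (non-strict) lexicographic order on sequences. -/
def LexLe [LinearOrder A] (u v : SeqSpace A) : Prop :=
  u = v ∨ ∃ n, (∀ i < n, u i = v i) ∧ u n < v n

end SeqSpace

open SeqSpace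

/-! If `d(σⁿx, x) < ψ(n)`, the first `n + ⌈-log ψ(n)⌉` symbols of `x` repeat its first `n`
symbols periodically, so `x` lies in one of at most `#Lₙ ≈ e^{hn}` sets of diameter
`e^{-n-⌈-log ψ(n)⌉} ≲ e^{-(1+b)n}`. Every point of `R(ψ)` lies in such a set for infinitely
many `n`, so the Hausdorff–Cantelli lemma gives `μH[d](R(ψ)) = 0` as soon as
`∑ₙ e^{(h - d(1+b))n} < ∞`, that is, as soon as `d > h/(1+b)`. -/

open Topology

theorem apply_mod_eq_of_forall_lt_add_eq {α : Type*} {f : ℕ → α} {n m : ℕ}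
    (h : ∀ j < m, f (j + n) = f j) (j : ℕ) (hj : j < n + m) : f (j % n) = f j := by
  rcases n.eq_zero_or_pos with rfl | hn
  · rw [Nat.mod_zero]
  induction j using Nat.strong_induction_on with
  | _ j ih =>
    rcases lt_or_ge j n with hjn | hnj
    · rw [Nat.mod_eq_of_lt hjn]
    · obtain ⟨i, rfl⟩ := Nat.exists_eq_add_of_le' hnj
      rw [Nat.add_mod_right, ih i (by omega) (by omega), h i (by omega)]

theorem ENNReal.tsum_ne_top_of_eventually_le {f g : ℕ → ℝ≥0∞} (hf : ∀ n, f n ≠ ∞)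
    (hfg : f ≤ᶠ[atTop] g) (hg : ∑' n, g n ≠ ∞) : ∑' n, f n ≠ ∞ := by
  obtain ⟨N, hN⟩ := eventually_atTop.1 hfg
  rw [← ENNReal.summable.sum_add_tsum_nat_add' (k := N)]
  refine ENNReal.add_ne_top.2 ⟨ENNReal.sum_ne_top.2 fun n _ => hf n, ne_top_of_le_ne_top hg ?_⟩
  calc ∑' k, f (k + N) ≤ ∑' k, g (k + N) := ENNReal.tsum_le_tsum fun k => hN _ (by omega)
    _ ≤ ∑' n, g n := ENNReal.tsum_comp_le_tsum_of_injective (add_left_injective N) g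

theorem hausdorffMeasure_eq_zero_of_subset_frequently {X : Type*} [EMetricSpace X]
    [MeasurableSpace X] [BorelSpace X] {ι : ℕ → Type*} [∀ n, Countable (ι n)]
    {E : ∀ n, ι n → Set X} {S : Set X} {d : ℝ}
    (hS : S ⊆ {x | ∃ᶠ n in atTop, ∃ i, x ∈ E n i})
    (hdiam : Tendsto (fun n => ⨆ i, Metric.ediam (E n i)) atTop (𝓝 0))
    (hsum : ∑' n, ∑' i, Metric.ediam (E n i) ^ d ≠ ∞) : μH[d] S = 0 := by
  set r : ℕ → ℝ≥0∞ := fun N => ⨆ k, ⨆ i, Metric.ediam (E (k + N) i)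
  have hr : Tendsto r atTop (𝓝 0) := by
    refine ENNReal.tendsto_nhds_zero.2 fun ε hε => ?_
    obtain ⟨N₀, hN₀⟩ := eventually_atTop.1 (ENNReal.tendsto_nhds_zero.1 hdiam ε hε)
    filter_upwards [eventually_ge_atTop N₀] with N hN
    exact iSup_le fun k => hN₀ (k + N) (by omega)
  have hcover : ∀ N, S ⊆ ⋃ p : Σ k, ι (k + N), E (p.1 + N) p.2 := fun N x hx => by
    obtain ⟨n, hn, i, hxi⟩ := (frequently_atTop.1 (hS hx)) N
    obtain ⟨k, rfl⟩ := Nat.exists_eq_add_of_le' hn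
    exact mem_iUnion.2 ⟨⟨k, i⟩, hxi⟩
  have hdiam_le_r : ∀ N (p : Σ k, ι (k + N)), Metric.ediam (E (p.1 + N) p.2) ≤ r N :=
    fun N p => le_iSup₂ (f := fun k i => Metric.ediam (E (k + N) i)) p.1 p.2
  refine nonpos_iff_eq_zero.1 ?_
  calc μH[d] S
      ≤ atTop.liminf fun N => ∑' p : Σ k, ι (k + N), Metric.ediam (E (p.1 + N) p.2) ^ d :=
        Measure.hausdorffMeasure_le_liminf_tsum d S r hr
          (fun N (p : Σ k, ι (k + N)) => E (p.1 + N) p.2)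
          (Eventually.of_forall hdiam_le_r) (Eventually.of_forall hcover)
    _ = atTop.liminf fun N => ∑' k, ∑' i, Metric.ediam (E (k + N) i) ^ d := by
      simp only [ENNReal.tsum_sigma']
    _ = 0 := (ENNReal.tendsto_sum_nat_add _ hsum).liminf_eq

theorem eventually_le_exp_mul_of_tendsto_log_div {u : ℕ → ℕ} {h a : ℝ}
    (hu : Tendsto (fun n => Real.log (u n) / n) atTop (𝓝 h)) (ha : h < a) :
    ∀ᶠ n : ℕ in atTop, (u n : ℝ) ≤ Real.exp (a * n) := by
  filter_upwards [hu.eventually (eventually_lt_nhds ha), eventually_gt_atTop 0] with n hn hpos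
  rcases (Nat.cast_nonneg (α := ℝ) (u n)).eq_or_lt with h0 | h0
  · rw [← h0]; positivity
  · rw [div_lt_iff₀ (by positivity)] at hn
    exact (Real.log_le_iff_le_exp h0).1 hn.le

theorem eventually_mul_le_of_ofReal_lt_liminf {u : ℕ → ℝ} {β : ℝ}
    (hβ : ENNReal.ofReal β < atTop.liminf fun n => ENNReal.ofReal (u n / n)) :
    ∀ᶠ n : ℕ in atTop, β * n ≤ u n := by
  filter_upwards [eventually_lt_of_lt_liminf hβ, eventually_gt_atTop 0] with n hn hpos
  have hβu := (ENNReal.ofReal_lt_ofReal_iff'.1 hn).1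
  rw [lt_div_iff₀ (by positivity)] at hβu
  exact hβu.le

theorem exists_lt_mul_one_add {h : ℝ} {b : ℝ≥0∞} {d : ℝ≥0}
    (hlt : ENNReal.ofReal h / (1 + b) < d) :
    ∃ β : ℝ, h < d * (1 + β) ∧ (β ≤ 0 ∨ ENNReal.ofReal β < b) := by
  have hd : 0 < (d : ℝ) := by exact_mod_cast zero_le.trans_lt hlt
  rcases eq_or_ne b ∞ with rfl | hb
  · refine ⟨max h 0 / d, ?_, Or.inr ENNReal.ofReal_lt_top⟩
    rw [mul_add, mul_div_cancel₀ _ hd.ne']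
    linarith [le_max_left h 0]
  · have hlt' : h < d * (1 + b.toReal) := by
      rw [ENNReal.div_lt_iff (Or.inl (by simp)) (Or.inr ENNReal.ofReal_ne_top),
        ← ENNReal.ofReal_toReal hb, ← ENNReal.ofReal_one,
        ← ENNReal.ofReal_add zero_le_one ENNReal.toReal_nonneg, ← ENNReal.ofReal_coe_nnreal,
        ← ENNReal.ofReal_mul d.coe_nonneg] at hlt
      exact (ENNReal.ofReal_lt_ofReal_iff'.1 hlt).1
    obtain ⟨β, hβ, hβb⟩ : ∃ β, h / d - 1 < β ∧ β < b.toReal := exists_between (by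
      rw [sub_lt_iff_lt_add', div_lt_iff₀ hd]; linarith)
    refine ⟨β, by rw [sub_lt_iff_lt_add', div_lt_iff₀ hd] at hβ; linarith, ?_⟩
    refine (le_or_gt β 0).imp_right fun hβ0 => ?_
    rw [← ENNReal.ofReal_toReal hb]
    exact ENNReal.ofReal_lt_ofReal_iff'.2 ⟨hβb, hβ0.trans hβb⟩

namespace SeqSpace

variable {A : Type*}

theorem shift_iterate_apply (x : SeqSpace A) (n j : ℕ) : shift^[n] x j = x (j + n) := by
  induction n generalizing x with
  | zero => rfl
  | succ n ih => exact ih (shift x)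

theorem dist_eq_exp_neg_lcp {x y : SeqSpace A} (h : x ≠ y) :
    dist x y = Real.exp (-(lcp x y : ℝ)) :=
  if_neg h

theorem dist_le_exp_neg_of_forall_lt_eq {x y : SeqSpace A} {k : ℕ} (h : ∀ j < k, x j = y j) :
    dist x y ≤ Real.exp (-k) := by
  by_cases hxy : x = y
  · rw [hxy, dist_self]; positivity
  · have hk : k ≤ lcp x y := not_lt.1 fun hlt => lcp_mem hxy (h _ hlt)
    rw [dist_eq_exp_neg_lcp hxy]
    exact Real.exp_le_exp.2 (neg_le_neg (Nat.cast_le.2 hk))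

theorem apply_eq_of_dist_lt {x y : SeqSpace A} {r : ℝ} (hxy : dist x y < r) {j : ℕ}
    (hj : (j : ℝ) < -Real.log r) : x j = y j := by
  by_contra hne
  have hlcp : lcp x y ≤ j := Nat.sInf_le hne
  rw [dist_eq_exp_neg_lcp fun hxy' => hne (congrFun hxy' j)] at hxy
  have := Real.log_lt_log (Real.exp_pos _) hxy
  rw [Real.log_exp] at this
  have : (lcp x y : ℝ) ≤ j := Nat.cast_le.2 hlcp
  linarith

def periodicCylinder (w : List A) (k : ℕ) : Set (SeqSpace A) :=
  {x | ∀ j < k, w[j % w.length]? = some (x j)}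

theorem ediam_periodicCylinder_le (w : List A) (k : ℕ) :
    Metric.ediam (periodicCylinder w k) ≤ ENNReal.ofReal (Real.exp (-k)) :=
  Metric.ediam_le fun x hx y hy => by
    rw [edist_dist]
    exact ENNReal.ofReal_le_ofReal (dist_le_exp_neg_of_forall_lt_eq fun j hj =>
      Option.some_injective _ ((hx j hj).symm.trans (hy j hj)))

theorem mem_periodicCylinder_of_dist_lt {x : SeqSpace A} {n : ℕ} (hn : 0 < n) {r : ℝ}
    (hx : dist (shift^[n] x) x < r) :
    x ∈ periodicCylinder (List.ofFn fun i : Fin n => x i) (n + ⌈-Real.log r⌉₊) := by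
  have hper : ∀ i < ⌈-Real.log r⌉₊, x (i + n) = x i := fun i hi =>
    (shift_iterate_apply x n i).symm.trans (apply_eq_of_dist_lt hx (Nat.lt_ceil.1 hi))
  intro j hj
  rw [List.length_ofFn, List.getElem?_ofFn, dif_pos (Nat.mod_lt _ hn)]
  exact congrArg some (apply_mod_eq_of_forall_lt_add_eq hper j hj)

theorem ofFn_mem_wordsOfLen {X : Set (SeqSpace A)} {x : SeqSpace A} (hx : x ∈ X) (n : ℕ) :
    (List.ofFn fun i : Fin n => x i) ∈ wordsOfLen (language X) n :=
  ⟨⟨x, hx, 0, fun i hi => by simp⟩, List.length_ofFn⟩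

theorem finite_wordsOfLen [Finite A] (L : Set (List A)) (n : ℕ) : (wordsOfLen L n).Finite :=
  (List.finite_length_eq A n).subset fun _ hw => hw.2

theorem recSet_subset_frequently_mem_periodicCylinder (X : Set (SeqSpace A)) (ψ : ℕ → ℝ) :
    recSet X ψ ⊆ {x | ∃ᶠ n in atTop, ∃ w : wordsOfLen (language X) n,
      x ∈ periodicCylinder (w : List A) (n + ⌈-Real.log (ψ n)⌉₊)} := by
  rintro x ⟨hxX, hrec⟩
  exact (hrec.and_eventually (eventually_gt_atTop 0)).mono fun n ⟨hn, hpos⟩ =>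
    ⟨⟨_, ofFn_mem_wordsOfLen hxX n⟩, mem_periodicCylinder_of_dist_lt hpos hn⟩

theorem tsum_ediam_periodicCylinder_rpow_le {s : Set (List A)} (hs : s.Finite) (k : ℕ) {d : ℝ}
    (hd : 0 ≤ d) :
    ∑' w : s, Metric.ediam (periodicCylinder (w : List A) k) ^ d ≤
      s.ncard * ENNReal.ofReal (Real.exp (-(d * k))) :=
  calc ∑' w : s, Metric.ediam (periodicCylinder (w : List A) k) ^ d
      ≤ ∑' _ : s, ENNReal.ofReal (Real.exp (-k)) ^ d :=
        ENNReal.tsum_le_tsum fun w => ENNReal.rpow_le_rpow (ediam_periodicCylinder_le _ _) hd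
    _ = s.ncard * ENNReal.ofReal (Real.exp (-(d * k))) := by
        rw [ENNReal.tsum_set_const, ← hs.cast_ncard_eq,
          ENNReal.ofReal_rpow_of_pos (Real.exp_pos _), ← Real.exp_mul, neg_mul, mul_comm (k : ℝ) d, ENat.toENNReal_coe]

theorem hausdorffMeasure_recSet_eq_zero [Finite A] [MeasurableSpace (SeqSpace A)]
    [BorelSpace (SeqSpace A)] {X : Set (SeqSpace A)} {ψ : ℕ → ℝ}
    {a β d : ℝ} (hd : 0 ≤ d) (had : a < d * (1 + β))
    (hL : ∀ᶠ n : ℕ in atTop, ((wordsOfLen (language X) n).ncard : ℝ) ≤ Real.exp (a * n))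
    (hm : ∀ᶠ n : ℕ in atTop, β * n ≤ ⌈-Real.log (ψ n)⌉₊) :
    μH[d] (recSet X ψ) = 0 := by
  set E : ∀ n, wordsOfLen (language X) n → Set (SeqSpace A) :=
    fun n w => periodicCylinder (w : List A) (n + ⌈-Real.log (ψ n)⌉₊)
  have level_le : ∀ n, ∑' w, Metric.ediam (E n w) ^ d ≤ (wordsOfLen (language X) n).ncard *
      ENNReal.ofReal (Real.exp (-(d * (n + ⌈-Real.log (ψ n)⌉₊ : ℕ)))) := fun n =>
    tsum_ediam_periodicCylinder_rpow_le (finite_wordsOfLen _ n) _ hd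
  have level_le_geom : ∀ᶠ n in atTop, ∑' w, Metric.ediam (E n w) ^ d ≤
      ENNReal.ofReal (Real.exp (a - d * (1 + β))) ^ n := by
    filter_upwards [hL, hm] with n hLn hmn
    refine (level_le n).trans ?_
    rw [← ENNReal.ofReal_pow (Real.exp_pos _).le, ← Real.exp_nat_mul, ← ENNReal.ofReal_natCast,
      ← ENNReal.ofReal_mul (Nat.cast_nonneg _)]
    refine ENNReal.ofReal_le_ofReal
      ((mul_le_mul_of_nonneg_right hLn (Real.exp_pos _).le).trans ?_)
    rw [← Real.exp_add]
    refine Real.exp_le_exp.2 ?_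
    push_cast
    nlinarith [mul_le_mul_of_nonneg_left hmn hd]
  have hdiam : Tendsto (fun n => ⨆ w, Metric.ediam (E n w)) atTop (𝓝 0) := by
    have hexp : Tendsto (fun n : ℕ => ENNReal.ofReal (Real.exp (-n))) atTop (𝓝 0) := by
      simpa using ENNReal.tendsto_ofReal
        (Real.tendsto_exp_neg_atTop_nhds_zero.comp tendsto_natCast_atTop_atTop)
    refine tendsto_of_tendsto_of_tendsto_of_le_of_le tendsto_const_nhds hexp (fun _ => zero_le)
      fun n => iSup_le fun w => (ediam_periodicCylinder_le _ _).trans ?_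
    refine ENNReal.ofReal_le_ofReal (Real.exp_le_exp.2 ?_)
    push_cast
    linarith [Nat.cast_nonneg (α := ℝ) ⌈-Real.log (ψ n)⌉₊]
  refine hausdorffMeasure_eq_zero_of_subset_frequently (E := E)
    (recSet_subset_frequently_mem_periodicCylinder X ψ) hdiam ?_
  refine ENNReal.tsum_ne_top_of_eventually_le
    (fun n => ne_top_of_le_ne_top (ENNReal.mul_ne_top (by simp) ENNReal.ofReal_ne_top)
      (level_le n))
    level_le_geom (tsum_geometric_lt_top.2 ?_).ne
  exact ENNReal.ofReal_lt_one.2 (Real.exp_lt_one_iff.2 (by linarith))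

end SeqSpace

theorem dimH_recSet_le_entropy_div_one_add_liminf_general
    {A : Type*} [Finite A] (X : Set (SeqSpace A))
    (h : ℝ)
    (hent : Tendsto (fun n => Real.log ((wordsOfLen (language X) n).ncard) / n)
      atTop (nhds h))
    (ψ : ℕ → ℝ)
    (b : ℝ≥0∞)
    (hb : atTop.liminf (fun n => ENNReal.ofReal (-Real.log (ψ n) / n)) = b) :
    dimH (recSet X ψ) ≤ ENNReal.ofReal h / (1 + b) := by
  borelize (SeqSpace A)
  refine dimH_le fun d hd => le_of_not_gt fun hlt => ?_
  obtain ⟨β, hβ, hβb⟩ := exists_lt_mul_one_add hlt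
  obtain ⟨a, hha, had⟩ := exists_between hβ
  have hm : ∀ᶠ n : ℕ in atTop, β * n ≤ ⌈-Real.log (ψ n)⌉₊ := by
    rcases hβb with hβ0 | hβb
    · exact Eventually.of_forall fun n =>
        (mul_nonpos_of_nonpos_of_nonneg hβ0 n.cast_nonneg).trans (Nat.cast_nonneg _)
    · exact (eventually_mul_le_of_ofReal_lt_liminf (hb ▸ hβb)).mono fun n hn =>
        hn.trans (Nat.le_ceil _)
  have hzero := hausdorffMeasure_recSet_eq_zero d.coe_nonneg had
    (eventually_le_exp_mul_of_tendsto_log_div hent hha) hm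
  simp [hzero] at hd

/-- **Upper bound in Theorem 1.4 C2.** For any subshift `X` and any positive `ψ`,
`dim_H R(ψ) ≤ h/(1+b)` where `h = h_top(X)` and `b = liminf (-log ψ(n))/n ∈ [0,∞]`
(with `h/(1+b) = 0` when `b = ∞`); no specification hypothesis is needed. -/
theorem dimH_recSet_le_entropy_div_one_add_liminf
    {A : Type*} [Finite A] (X : Set (SeqSpace A))
    (hXcomp : IsCompact X) (hXinv : shift '' X ⊆ X)
    (h : ℝ)
    (hent : Tendsto (fun n => Real.log ((wordsOfLen (language X) n).ncard) / n)
      atTop (nhds h))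
    (ψ : ℕ → ℝ) (hψpos : ∀ n, 0 < ψ n)
    (b : ℝ≥0∞)
    (hb : atTop.liminf (fun n => ENNReal.ofReal (-Real.log (ψ n) / n)) = b) :
    dimH (recSet X ψ) ≤ ENNReal.ofReal h / (1 + b) :=
  dimH_recSet_le_entropy_div_one_add_liminf_general X h hent ψ b hb
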